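/- arXiv:2106.07247 — 11 statements merged into one kernel-verified Lean document; each statement's English description precedes it below -/
import Mathlib

section
/- For positive reals λ_1,…,λ_n, the sum over all permutations q of {1,…,n} of the products ∏_{i=1}^{n-1} ( λ_{q_i} / (λ_{q_i} + λ_{q_{i+1}} + ⋯ + λ_{q_n}) ) equals 1. (This shows the proposed steady-state probabilities of the heterogeneous SHS form a probability distribution.) -/
open Finset Equiv

private lemma succ_filter_sum {n : ℕ} (i : Fin n) (g : Fin (n+1) → ℝ) :
    ∑ j ∈ Finset.univ.filter (fun j : Fin (n+1) => i.succ ≤ j), g j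
      = ∑ j ∈ Finset.univ.filter (fun j : Fin n => i ≤ j), g j.succ := by
  rw [Finset.sum_filter, Finset.sum_filter, Fin.sum_univ_succ]
  have h0 : ¬ (i.succ ≤ (0 : Fin (n+1))) := by
    simp [Fin.le_def]
  rw [if_neg h0, zero_add]
  refine Finset.sum_congr rfl fun j _ => ?_
  simp only [Fin.succ_le_succ_iff]

private lemma key : ∀ (n : ℕ) (lam : Fin n → ℝ), (∀ i, 0 < lam i) →
    ∑ σ : Equiv.Perm (Fin n),
      ∏ i : Fin n,
        lam (σ i) / ∑ j ∈ Finset.univ.filter (fun j : Fin n => i ≤ j), lam (σ j) = 1 := by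
  intro n
  induction n with
  | zero => intro lam _; simp
  | succ n ih =>
    intro lam hlam
    have hT : 0 < ∑ j, lam j := Finset.sum_pos (fun j _ => hlam j) ⟨0, Finset.mem_univ 0⟩
    rw [← Equiv.sum_comp Equiv.Perm.decomposeFin.symm, Fintype.sum_prod_type]
    have hmain : ∀ p : Fin (n+1), ∀ e : Perm (Fin n),
        (∏ i : Fin (n+1),
          lam ((Equiv.Perm.decomposeFin.symm (p, e)) i) /
            ∑ j ∈ Finset.univ.filter (fun j : Fin (n+1) => i ≤ j),
              lam ((Equiv.Perm.decomposeFin.symm (p, e)) j))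
        = (lam p / ∑ j, lam j) *
          ∏ i : Fin n,
            (fun k => lam (Equiv.swap 0 p k.succ)) (e i) /
              ∑ j ∈ Finset.univ.filter (fun j : Fin n => i ≤ j),
                (fun k => lam (Equiv.swap 0 p k.succ)) (e j) := by
      intro p e
      set σ := Equiv.Perm.decomposeFin.symm (p, e) with hσ
      rw [Fin.prod_univ_succ]
      congr 1
      · rw [Equiv.Perm.decomposeFin_symm_apply_zero]
        congr 1
        have : Finset.univ.filter (fun j : Fin (n+1) => (0:Fin (n+1)) ≤ j) = Finset.univ := by
          simp [Fin.zero_le]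
        rw [this]
        exact Equiv.sum_comp σ lam
      · refine Finset.prod_congr rfl fun i _ => ?_
        rw [succ_filter_sum]
        simp only [hσ, Equiv.Perm.decomposeFin_symm_apply_succ]
    calc ∑ p : Fin (n+1), ∑ e : Perm (Fin n),
          ∏ i : Fin (n+1),
            lam ((Equiv.Perm.decomposeFin.symm (p, e)) i) /
              ∑ j ∈ Finset.univ.filter (fun j : Fin (n+1) => i ≤ j),
                lam ((Equiv.Perm.decomposeFin.symm (p, e)) j)
        = ∑ p : Fin (n+1), (lam p / ∑ j, lam j) * 1 := by
          refine Finset.sum_congr rfl fun p _ => ?_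
          simp only [hmain p]
          rw [← Finset.mul_sum]
          congr 1
          exact ih (fun k => lam (Equiv.swap 0 p k.succ)) (fun k => hlam _)
      _ = 1 := by
          simp only [mul_one]
          rw [← Finset.sum_div, div_self hT.ne']

/-- The proposed steady-state probabilities of the heterogeneous SHS sum to 1:
for positive reals `λ₁,…,λₙ`, summing over all permutations `σ` the products
`∏_{i=1}^{n-1} λ_{σ(i)} / (λ_{σ(i)} + ⋯ + λ_{σ(n)})` gives 1. -/
theorem stmt_0 (n : ℕ) (hn : 1 ≤ n) (lam : Fin n → ℝ) (hlam : ∀ i, 0 < lam i) :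
    ∑ σ : Equiv.Perm (Fin n),
      ∏ i : Fin n,
        (if (i : ℕ) + 1 < n then
          lam (σ i) / ∑ j ∈ Finset.univ.filter (fun j : Fin n => i ≤ j), lam (σ j)
        else 1) = 1 := by
  have h := key n lam hlam
  refine Eq.trans (Finset.sum_congr rfl fun σ _ => Finset.prod_congr rfl fun i _ => ?_) h
  by_cases hi : (i : ℕ) + 1 < n
  · rw [if_pos hi]
  · rw [if_neg hi]
    have hival : (i : ℕ) = n - 1 := by omega
    have hfil : Finset.univ.filter (fun j : Fin n => i ≤ j) = {i} := by
      ext j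
      simp only [Finset.mem_filter, Finset.mem_univ, true_and, Finset.mem_singleton]
      constructor
      · intro hij
        have : (j : ℕ) ≤ (i : ℕ) := by omega
        exact le_antisymm (Fin.le_def.mpr this) hij
      · rintro rfl; exact le_refl _
    rw [hfil, Finset.sum_singleton, div_self (hlam (σ i)).ne']
end

section
/- For every permutation q of {1,…,n}, the quantities π_q = ∏_{i=1}^{n-1} λ_{q_i}/(∑_{j=i}^{n} λ_{q_j}) satisfy the global balance equation π_q · (∑_{i=1}^n λ_{q_i}) = λ_{q_1} · ∑_{i=1}^n π_{h_i^{-1}(q)}, where h_i^{-1}(q) denotes the permutation obtained from q by moving its first element q_1 to position i (i.e., h_i^{-1}(q) = (q_2,…,q_i,q_1,q_{i+1},…,q_n), with h_1^{-1}(q)=q). -/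
/-!
Reading `π_q` as the Plackett–Luce probability of the ranking `q` (draw the items one at a time
without replacement, each with probability proportional to its weight), the balance equation
reduces to the identity `∑ᵢ π(insert x at position i into b) = π(b)`: summing over the
position of `x` marginalises it out.  This is proved by induction on `b`, splitting off the
case where `x` is drawn first.
-/

open Finset

noncomputable def plackettLuce : {n : ℕ} → (Fin n → ℝ) → ℝ
  | 0, _ => 1
  | _ + 1, a => a 0 / (∑ i, a i) * plackettLuce (Fin.tail a)

theorem plackettLuce_cons {n : ℕ} (x : ℝ) (b : Fin n → ℝ) :
    plackettLuce (Fin.cons x b) = x / (x + ∑ i, b i) * plackettLuce b := by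
  simp [plackettLuce]

theorem plackettLuce_mul_sum {n : ℕ} (a : Fin (n + 1) → ℝ) (ha : ∑ i, a i ≠ 0) :
    plackettLuce a * ∑ i, a i = a 0 * plackettLuce (Fin.tail a) := by
  rw [plackettLuce]
  field_simp

theorem plackettLuce_eq_prod {n : ℕ} (a : Fin n → ℝ) :
    plackettLuce a = ∏ i, a i / ∑ j ∈ univ.filter (i ≤ ·), a j := by
  induction n with
  | zero => rfl
  | succ n ih =>
    rw [Fin.prod_univ_succ, plackettLuce, ih]
    simp [filter_le_eq_Ici, Fin.sum_Ici_succ, Fin.tail]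

theorem plackettLuce_eq_prod_of_pos {n : ℕ} {a : Fin n → ℝ} (ha : ∀ i, 0 < a i) :
    plackettLuce a = ∏ i : Fin n,
      if (i : ℕ) + 1 < n then a i / ∑ j ∈ univ.filter (i ≤ ·), a j else 1 := by
  rw [plackettLuce_eq_prod]
  refine prod_congr rfl fun i _ => ?_
  split_ifs with hi
  · rfl
  · obtain ⟨m, rfl⟩ : ∃ m, n = m + 1 := ⟨n - 1, by omega⟩
    obtain rfl : i = Fin.last m := Fin.ext (by simp only [Fin.val_last]; omega)
    simp [filter_eq', (ha _).ne']

theorem comp_cycleRange_eq_insertNth {α : Type*} {n : ℕ} (a : Fin (n + 1) → α)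
    (i : Fin (n + 1)) :
    a ∘ Fin.cycleRange i = Fin.insertNth i (a 0) (Fin.tail a) := by
  rw [← Fin.cons_comp_cycleRange, Fin.cons_self_tail]

theorem sum_plackettLuce_insertNth {n : ℕ} {x : ℝ} (hx : 0 < x) {b : Fin n → ℝ}
    (hb : ∀ i, 0 < b i) : ∑ i, plackettLuce (Fin.insertNth i x b) = plackettLuce b := by
  induction n with
  | zero => simp [hx.ne', plackettLuce]
  | succ n ih =>
    cases b using Fin.consCases with
    | cons y b =>
      have hy : 0 < y := by simpa using hb 0
      have hS : 0 ≤ ∑ i, b i := sum_nonneg fun i _ => by simpa using (hb i.succ).le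
      rw [Fin.sum_univ_succ]
      simp only [Fin.insertNth_zero', Fin.insertNth_succ_cons, plackettLuce_cons,
        Fin.sum_insertNth, ← mul_sum, Fin.sum_cons, ih fun i => by simpa using hb i.succ]
      field_simp
      ring

/-- Global balance equation for the proposed stationary distribution:
`π_q (∑ᵢ λ_{q_i}) = λ_{q_1} ∑ᵢ π_{h_i⁻¹(q)}`, where `h_i⁻¹(q)` moves the first
element of `q` to position `i`.  In 0-based form, `h_i⁻¹(q) = q ∘ Fin.cycleRange i`. -/
theorem stmt_1 (n : ℕ) (hn : 0 < n) (lam : Fin n → ℝ) (hlam : ∀ i, 0 < lam i)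
    (Pi : Equiv.Perm (Fin n) → ℝ)
    (hPi : ∀ σ : Equiv.Perm (Fin n), Pi σ = ∏ i : Fin n,
        (if (i : ℕ) + 1 < n then
          lam (σ i) / ∑ j ∈ Finset.univ.filter (fun j : Fin n => i ≤ j), lam (σ j)
        else 1))
    (q : Equiv.Perm (Fin n)) :
    Pi q * ∑ i : Fin n, lam (q i)
      = lam (q ⟨0, hn⟩) * ∑ i : Fin n, Pi (q * Fin.cycleRange i) := by
  obtain ⟨N, rfl⟩ : ∃ N, n = N + 1 := ⟨n - 1, by omega⟩
  have hPi_eq : ∀ σ, Pi σ = plackettLuce (lam ∘ σ) := fun σ => by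
    rw [hPi, plackettLuce_eq_prod_of_pos (a := lam ∘ σ) fun i => hlam (σ i)]
    rfl
  have h_move : ∀ i, Pi (q * Fin.cycleRange i) =
      plackettLuce (Fin.insertNth i (lam (q 0)) (Fin.tail (lam ∘ q))) := fun i => by
    rw [hPi_eq, Equiv.Perm.coe_mul, ← Function.comp_assoc, comp_cycleRange_eq_insertNth]
    rfl
  calc Pi q * ∑ i, lam (q i)
      = lam (q 0) * plackettLuce (Fin.tail (lam ∘ q)) := by
        rw [hPi_eq]
        exact plackettLuce_mul_sum _ (sum_pos (fun i _ => hlam (q i)) univ_nonempty).ne'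
    _ = lam (q 0) * ∑ i, plackettLuce (Fin.insertNth i (lam (q 0)) (Fin.tail (lam ∘ q))) := by
        rw [sum_plackettLuce_insertNth (b := Fin.tail (lam ∘ q)) (hlam (q 0))
          fun i => hlam (q i.succ)]
    _ = lam (q ⟨0, hn⟩) * ∑ i, Pi (q * Fin.cycleRange i) := by
        simp only [h_move]
        rfl
end

section
/- Let n ≥ 1, λ, μ > 0, ρ = λ/μ. Suppose real numbers v_0, v_1, …, v_n satisfy: (i) v_1 = 1/(nλ); (ii) for each 2 ≤ i ≤ n, ((n-i+1)λ + (i-1)μ) v_i = 1 + μ ∑_{j=1}^{i-1} v_j + λ(n-i+1) v_{i-1}; and (iii) v_0 = 1/(nμ) + (1/n) ∑_{j=1}^{n} v_j. Then v_0 = (1/μ)[ (1/(nρ)) ∑_{j=1}^{n-1} ∏_{i=1}^{j} ( ρ(n-i+1)/(i + (n-i)ρ) ) + 1/(nρ) + (1/n^2) ∏_{i=1}^{n-1} ( ρ(n-i+1)/(i + (n-i)ρ) ) ]. -/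
/-!
Write `P k` for the `k`-th partial product of the claim (`lcfsWeight`). Equation (ii) has a
positive leading coefficient, so (i) and (ii) determine `v 1, …, v n`, and it suffices to check
that `v j = (1 / (nλ)) ∑_{k<j} P k` solves them. After exchanging the double sum
`∑_{j ≤ i-1} ∑_{k<j}`, this reduces to the telescoping identity
`∑_{k ≤ m} k P k = ρ (n - (n - m) P m)`, a consequence of
`(k + 1 + (n - k - 1) ρ) P (k + 1) = ρ (n - k) P k`; the same identity evaluates the sum in (iii).
-/

open Finset

noncomputable def lcfsWeight (n : ℕ) (rho : ℝ) (j : ℕ) : ℝ :=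
  ∏ i ∈ Icc 1 j, rho * ((n : ℝ) - (i : ℝ) + 1) / ((i : ℝ) + ((n : ℝ) - (i : ℝ)) * rho)

section lcfsWeight

variable (n : ℕ) {rho : ℝ}

@[simp]
lemma lcfsWeight_zero : lcfsWeight n rho 0 = 1 := by simp [lcfsWeight]

lemma mul_lcfsWeight_succ (hrho : 0 ≤ rho) {m : ℕ} (hm : m < n) :
    ((m + 1 : ℝ) + (n - (m + 1)) * rho) * lcfsWeight n rho (m + 1)
      = rho * (n - m) * lcfsWeight n rho m := by
  have hmn : (m + 1 : ℝ) ≤ n := by exact_mod_cast hm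
  have hden : (0 : ℝ) < (m + 1) + (n - (m + 1)) * rho := by
    have := mul_nonneg (sub_nonneg.mpr hmn) hrho
    linarith
  rw [lcfsWeight, prod_Icc_succ_top (by omega), ← lcfsWeight]
  push_cast
  field_simp
  ring

lemma sum_range_mul_lcfsWeight (hrho : 0 ≤ rho) {m : ℕ} (hm : m ≤ n) :
    ∑ k ∈ range (m + 1), (k : ℝ) * lcfsWeight n rho k
      = rho * (n - (n - m) * lcfsWeight n rho m) := by
  induction m with
  | zero => simp
  | succ m ih =>
    rw [sum_range_succ, ih (by omega)]
    push_cast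
    linear_combination mul_lcfsWeight_succ n hrho hm

end lcfsWeight

lemma sum_Icc_sum_range {R : Type*} [CommRing R] (g : ℕ → R) (m : ℕ) :
    ∑ j ∈ Icc 1 m, ∑ k ∈ range j, g k = ∑ k ∈ range m, ((m : R) - k) * g k := by
  induction m with
  | zero => simp
  | succ m ih =>
    rw [sum_Icc_succ_top (by omega), ih, sum_range_succ _ m, sum_range_succ _ m, ← add_assoc,
      ← sum_add_distrib]
    push_cast
    simp only [add_sub_right_comm, add_mul, one_mul, sub_self, zero_add]

def SolvesAoISystem (n : ℕ) (lam mu : ℝ) (v : ℕ → ℝ) : Prop :=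
  v 1 = 1 / ((n : ℝ) * lam) ∧
    ∀ i : ℕ, 2 ≤ i → i ≤ n →
      (((n : ℝ) - (i : ℝ) + 1) * lam + ((i : ℝ) - 1) * mu) * v i
        = 1 + mu * ∑ j ∈ Icc 1 (i - 1), v j + lam * ((n : ℝ) - (i : ℝ) + 1) * v (i - 1)

lemma SolvesAoISystem.eq_of_mem_Icc {n : ℕ} {lam mu : ℝ} (hl : 0 < lam) (hm : 0 < mu)
    {v w : ℕ → ℝ} (hv : SolvesAoISystem n lam mu v) (hw : SolvesAoISystem n lam mu w) :
    ∀ i ∈ Icc 1 n, v i = w i := by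
  intro i
  induction i using Nat.strong_induction_on with | _ i ih => ?_
  intro hi
  obtain ⟨hi1, hin⟩ := mem_Icc.mp hi
  rcases hi1.eq_or_lt with rfl | hi2
  · exact hv.1.trans hw.1.symm
  have hcoef : 0 < ((n : ℝ) - i + 1) * lam + ((i : ℝ) - 1) * mu := by
    have hin' : (i : ℝ) ≤ n := by exact_mod_cast hin
    have hi1' : (1 : ℝ) ≤ i := by exact_mod_cast hi1
    have := mul_pos (by linarith : (0 : ℝ) < n - i + 1) hl
    have := mul_nonneg (sub_nonneg.mpr hi1') hm.le
    linarith
  have hsum : ∑ j ∈ Icc 1 (i - 1), v j = ∑ j ∈ Icc 1 (i - 1), w j :=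
    sum_congr rfl fun j hj => by
      obtain ⟨hj1, hji⟩ := mem_Icc.mp hj
      exact ih j (by omega) (mem_Icc.mpr ⟨hj1, by omega⟩)
  have hprev : v (i - 1) = w (i - 1) := ih _ (by omega) (mem_Icc.mpr ⟨by omega, by omega⟩)
  apply mul_left_cancel₀ hcoef.ne'
  rw [hv.2 i hi2 hin, hw.2 i hi2 hin, hsum, hprev]

noncomputable def aoiSolution (n : ℕ) (lam mu : ℝ) (j : ℕ) : ℝ :=
  1 / (n * lam) * ∑ k ∈ range j, lcfsWeight n (lam / mu) k

lemma solvesAoISystem_aoiSolution {n : ℕ} {lam mu : ℝ} (hl : 0 < lam) (hm : 0 < mu) :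
    SolvesAoISystem n lam mu (aoiSolution n lam mu) := by
  refine ⟨by simp [aoiSolution], fun i hi2 hin => ?_⟩
  obtain ⟨m, rfl⟩ : ∃ m, i = m + 1 := ⟨i - 1, by omega⟩
  have hn : (n : ℝ) ≠ 0 := by norm_cast; omega
  have htel := sum_range_mul_lcfsWeight n (div_pos hl hm).le (m := m) (by omega)
  rw [sum_range_succ] at htel
  have hcancel : mu * (lam / mu) = lam := mul_div_cancel₀ lam hm.ne'
  simp only [aoiSolution, Nat.add_sub_cancel, ← mul_sum, sum_Icc_sum_range, sum_range_succ,
    sub_mul, sum_sub_distrib]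
  push_cast
  field_simp
  linear_combination mu * htel + (n - (n - m) * lcfsWeight n (lam / mu) m) * hcancel

lemma sum_Icc_aoiSolution {lam mu : ℝ} (hl : 0 < lam) (hm : 0 < mu) (m : ℕ) :
    ∑ j ∈ Icc 1 (m + 1), aoiSolution (m + 1) lam mu j
      = 1 / lam * ∑ k ∈ range (m + 1), lcfsWeight (m + 1) (lam / mu) k - 1 / mu
        + lcfsWeight (m + 1) (lam / mu) m / ((m + 1) * mu) := by
  simp only [aoiSolution, ← mul_sum, sum_Icc_sum_range, sub_mul, sum_sub_distrib,
    sum_range_mul_lcfsWeight (m + 1) (div_pos hl hm).le m.le_succ]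
  push_cast
  field_simp
  ring

/-- Average AoI for the homogeneous single-source n-server LCFS network (Theorem 1). -/
theorem stmt_3 (n : ℕ) (hn : 1 ≤ n) (lam mu : ℝ) (hl : 0 < lam) (hm : 0 < mu)
    (rho : ℝ) (hrho : rho = lam / mu) (v : ℕ → ℝ)
    (h1 : v 1 = 1 / ((n : ℝ) * lam))
    (h2 : ∀ i : ℕ, 2 ≤ i → i ≤ n →
      (((n : ℝ) - (i : ℝ) + 1) * lam + ((i : ℝ) - 1) * mu) * v i
        = 1 + mu * ∑ j ∈ Finset.Icc 1 (i - 1), v j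
          + lam * ((n : ℝ) - (i : ℝ) + 1) * v (i - 1))
    (h0 : v 0 = 1 / ((n : ℝ) * mu) + (1 / (n : ℝ)) * ∑ j ∈ Finset.Icc 1 n, v j) :
    v 0 = (1 / mu) *
      ((1 / ((n : ℝ) * rho)) * ∑ j ∈ Finset.Icc 1 (n - 1),
          ∏ i ∈ Finset.Icc 1 j,
            rho * ((n : ℝ) - (i : ℝ) + 1) / ((i : ℝ) + ((n : ℝ) - (i : ℝ)) * rho)
        + 1 / ((n : ℝ) * rho)
        + (1 / ((n : ℝ) ^ 2)) * ∏ i ∈ Finset.Icc 1 (n - 1),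
            rho * ((n : ℝ) - (i : ℝ) + 1) / ((i : ℝ) + ((n : ℝ) - (i : ℝ)) * rho)) := by
  subst hrho
  obtain ⟨m, rfl⟩ : ∃ m, n = m + 1 := ⟨n - 1, by omega⟩
  have hv : ∀ j ∈ Icc 1 (m + 1), v j = aoiSolution (m + 1) lam mu j :=
    SolvesAoISystem.eq_of_mem_Icc hl hm ⟨h1, h2⟩ (solvesAoISystem_aoiSolution hl hm)
  rw [h0, sum_congr rfl hv, sum_Icc_aoiSolution hl hm, sum_range_eq_add_Ico _ (by omega : 0 < m + 1),
    Ico_add_one_right_eq_Icc, lcfsWeight_zero, Nat.add_sub_cancel]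
  simp only [← lcfsWeight.eq_1]
  push_cast
  field_simp
  ring
end

section
/- Let λ_1 > 0, λ̄ ≥ 0, μ > 0 and set λ = λ_1 + λ̄. If real numbers v_0, v_1, v_2 satisfy the linear system: 2μ v_0 = 1 + μ(v_1 + v_2); (λ + λ_1) v_1 = 1 + λ̄ v_2; and (λ + λ̄ + μ) v_2 = 1 + (λ_1 + μ) v_1 + 2 λ̄ v_0, then v_0 = 1/(2(λ+μ)) + (λ+μ)/(2μ λ_1). -/
/-- Multi-source two-server homogeneous network (Corollary 1): the SHS system for
`n = 2` servers yields average AoI `v₀ = 1/(2(λ+μ)) + (λ+μ)/(2μλ₁)`. -/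
theorem stmt_6 (lam1 lbar mu : ℝ) (h1 : 0 < lam1) (hb : 0 ≤ lbar) (hm : 0 < mu)
    (lam : ℝ) (hlam : lam = lam1 + lbar) (v0 v1 v2 : ℝ)
    (e0 : 2 * mu * v0 = 1 + mu * (v1 + v2))
    (e1 : (lam + lam1) * v1 = 1 + lbar * v2)
    (e2 : (lam + lbar + mu) * v2 = 1 + (lam1 + mu) * v1 + 2 * lbar * v0) :
    v0 = 1 / (2 * (lam + mu)) + (lam + mu) / (2 * mu * lam1) := by
  subst hlam
  have hM : lam1 + lbar + mu > 0 := by linarith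
  field_simp
  ring_nf
  nlinarith [sq_nonneg (lam1+lbar+mu), mul_pos h1 hm,
    mul_self_nonneg (v1 - v2),
    (by linear_combination (2*lam1*(lam1+lbar+mu)+2*lbar*(lam1-lbar)+4*lbar^2) * e0
      + 2*mu*(lam1+lbar+mu)*e1 + (2*mu*(lam1-lbar)+4*lbar*mu)*e2 :
      4*mu*lam1*(lam1+lbar+mu)*v0 = 2*mu*lam1 + 2*(lam1+lbar+mu)^2)]
end

section
/- Let λ_1, λ_2, μ_1, μ_2 > 0 and set π_1 = λ_1/(λ_1+λ_2), π_2 = λ_2/(λ_1+λ_2), s = λ_1+λ_2+μ_1+μ_2. Define v_{11} = π_1/(λ_1+λ_2), v_{22} = π_2/(λ_1+λ_2), v_{12} = π_1(1/(λ_1+λ_2) + 1/(λ_2+μ_1)), v_{21} = π_2(1/(λ_1+λ_2) + 1/(λ_1+μ_2)), and let (v_{10}, v_{20}) be the solution of the 2×2 system (λ_2+μ_1+μ_2) v_{10} − λ_1 v_{20} = π_1 + μ_1 v_{11} + μ_2 v_{12} and −λ_2 v_{10} + (λ_1+μ_1+μ_2) v_{20} = π_2 + μ_1 v_{21} + μ_2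 v_{22}. Then the six numbers satisfy all six SHS equations: s·(v_{10},v_{11},v_{12}) = (π_1,π_1,π_1) + λ_1(v_{10},0,v_{12}) + λ_1(v_{20},0,v_{22}) + μ_1(v_{11},v_{11},v_{11}) + μ_2(v_{12},v_{11},v_{12}), and s·(v_{20},v_{22},v_{21}) = (π_2,π_2,π_2) + λ_2(v_{10},0,v_{11}) + λ_2(v_{20},0,v_{21}) + μ_1(v_{21},v_{22},v_{21}) + μ_2(v_{22},v_{22},v_{22}). -/
/-- The explicit quantities solve all six SHS equations of the single-source
two-server heterogeneous LCFS network. -/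
theorem stmt_8 (l1 l2 m1 m2 : ℝ) (hl1 : 0 < l1) (hl2 : 0 < l2) (hm1 : 0 < m1) (hm2 : 0 < m2)
    (pi1 pi2 s v11 v22 v12 v21 v10 v20 : ℝ)
    (hpi1 : pi1 = l1 / (l1 + l2)) (hpi2 : pi2 = l2 / (l1 + l2))
    (hs : s = l1 + l2 + m1 + m2)
    (hv11 : v11 = pi1 / (l1 + l2)) (hv22 : v22 = pi2 / (l1 + l2))
    (hv12 : v12 = pi1 * (1 / (l1 + l2) + 1 / (l2 + m1)))
    (hv21 : v21 = pi2 * (1 / (l1 + l2) + 1 / (l1 + m2)))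
    (h10 : (l2 + m1 + m2) * v10 - l1 * v20 = pi1 + m1 * v11 + m2 * v12)
    (h20 : -l2 * v10 + (l1 + m1 + m2) * v20 = pi2 + m1 * v21 + m2 * v22) :
    (s * v10 = pi1 + l1 * v10 + l1 * v20 + m1 * v11 + m2 * v12) ∧
    (s * v11 = pi1 + m1 * v11 + m2 * v11) ∧
    (s * v12 = pi1 + l1 * v12 + l1 * v22 + m1 * v11 + m2 * v12) ∧
    (s * v20 = pi2 + l2 * v10 + l2 * v20 + m1 * v21 + m2 * v22) ∧
    (s * v22 = pi2 + m1 * v22 + m2 * v22) ∧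
    (s * v21 = pi2 + l2 * v11 + l2 * v21 + m1 * v21 + m2 * v22) := by
  have h12 : 0 < l1 + l2 := by linarith
  have h2m1 : 0 < l2 + m1 := by linarith
  have h1m2 : 0 < l1 + m2 := by linarith
  subst hpi1 hpi2 hs hv11 hv22 hv12 hv21
  refine ⟨by linarith, ?_, ?_, by linarith, ?_, ?_⟩ <;>
    field_simp <;> ring
end

section
/- Let λ_1, λ_2, μ_1, μ_2 > 0 and suppose (v_{10}, v_{20}) solves (λ_2+μ_1+μ_2) v_{10} − λ_1 v_{20} = π_1 + μ_1 v_{11} + μ_2 v_{12} and −λ_2 v_{10} + (λ_1+μ_1+μ_2) v_{20} = π_2 + μ_1 v_{21} + μ_2 v_{22}, with π_1 = λ_1/(λ_1+λ_2), π_2 = λ_2/(λ_1+λ_2), v_{11} = π_1/(λ_1+λ_2), v_{22} = π_2/(λ_1+λ_2), v_{12} = π_1(1/(λ_1+λ_2)+1/(λ_2+μ_1)), v_{21} = π_2(1/(λ_1+λ_2)+1/(λ_1+μ_2)). Then v_{10} + v_{20} = 1/(μ_1+μ_2) + 1/(λ_1+λ_2) + (1/((μ_1+μ_2)(λ_1+λ_2)))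 · ( μ_1 λ_2/(λ_1+μ_2) + μ_2 λ_1/(λ_2+μ_1) ). -/
/-- Theorem 5: the average AoI of the single-source two-server heterogeneous network. -/
theorem stmt_9 (l1 l2 m1 m2 : ℝ) (hl1 : 0 < l1) (hl2 : 0 < l2) (hm1 : 0 < m1) (hm2 : 0 < m2)
    (pi1 pi2 v11 v22 v12 v21 v10 v20 : ℝ)
    (hpi1 : pi1 = l1 / (l1 + l2)) (hpi2 : pi2 = l2 / (l1 + l2))
    (hv11 : v11 = pi1 / (l1 + l2)) (hv22 : v22 = pi2 / (l1 + l2))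
    (hv12 : v12 = pi1 * (1 / (l1 + l2) + 1 / (l2 + m1)))
    (hv21 : v21 = pi2 * (1 / (l1 + l2) + 1 / (l1 + m2)))
    (h10 : (l2 + m1 + m2) * v10 - l1 * v20 = pi1 + m1 * v11 + m2 * v12)
    (h20 : -l2 * v10 + (l1 + m1 + m2) * v20 = pi2 + m1 * v21 + m2 * v22) :
    v10 + v20 = 1 / (m1 + m2) + 1 / (l1 + l2)
      + (1 / ((m1 + m2) * (l1 + l2))) * (m1 * l2 / (l1 + m2) + m2 * l1 / (l2 + m1)) := by
  subst hpi1 hpi2 hv11 hv22 hv12 hv21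
  have hll : l1 + l2 ≠ 0 := by positivity
  have hmm : m1 + m2 ≠ 0 := by positivity
  have h1 : l2 + m1 ≠ 0 := by positivity
  have h2 : l1 + m2 ≠ 0 := by positivity
  have hsum : (m1 + m2) * (v10 + v20) =
      ((l2 + m1 + m2) * v10 - l1 * v20) + (-l2 * v10 + (l1 + m1 + m2) * v20) := by ring
  rw [h10, h20] at hsum
  have hv : v10 + v20 = (l1 / (l1 + l2) + m1 * (l1 / (l1 + l2) / (l1 + l2)) +
      m2 * (l1 / (l1 + l2) * (1 / (l1 + l2) + 1 / (l2 + m1))) +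
      (l2 / (l1 + l2) + m1 * (l2 / (l1 + l2) * (1 / (l1 + l2) + 1 / (l1 + m2))) +
      m2 * (l2 / (l1 + l2) / (l1 + l2)))) / (m1 + m2) := by
    rw [eq_div_iff hmm]; linarith [hsum]
  rw [hv]
  field_simp
  ring
end

section
/- Let n ≥ 1 and λ_1,…,λ_n, μ_1,…,μ_n be reals. Define the n!×n! matrix T_0, indexed by permutations of {1,…,n}, by T_0(q,p) = ∑_{i=2}^n λ_{q_i} + ∑_{i=1}^n μ_{q_i} if q = p; T_0(q,p) = −λ_{q_1} if q = h_j(p) for some j ∈ {2,…,n} (where h_j(p) moves the j-th element of p to the front); and T_0(q,p) = 0 otherwise. Then every column of T_0 sums to ∑_{i=1}^n μ_i; consequently, for any vectors v, c indexed by permutations with T_0 v = c, one has (∑_{i=1}^n μ_i) · ∑_p v_p = ∑_q c_q. -/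
/-!
Column `p` of `T₀` is supported on the permutations `p * (cycleRange j)⁻¹`, `j ∈ Fin n`, which are
pairwise distinct because `(cycleRange j)⁻¹` sends `0` to `j`; the term `j = 0` is the diagonal.
The off-diagonal entries `-λ_{p j}`, `j ≠ 0`, therefore cancel the `λ`-part of the diagonal entry,
and what remains is `∑ᵢ μ_{p i} = ∑ᵢ μᵢ`. Summing `T₀ v = c` over all rows then gives the identity.
-/

open Finset Function Equiv

namespace Matrix

theorem sum_mulVec_of_forall_sum_col_eq {m n R : Type*} [Fintype m] [Fintype n]
    [NonUnitalCommSemiring R] (A : Matrix m n R) (s : R) (hA : ∀ j, ∑ i, A i j = s)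
    (v : n → R) : ∑ i, (A *ᵥ v) i = s * ∑ j, v j := by
  simp only [mulVec, dotProduct, mul_sum]
  rw [sum_comm]
  exact sum_congr rfl fun j _ => by rw [← sum_mul, hA]

end Matrix

namespace Fin

variable {n : ℕ}

theorem cycleRange_inv_apply_zero (j : Fin (n + 1)) : (cycleRange j)⁻¹ 0 = j :=
  cycleRange_symm_zero j

theorem injective_mul_cycleRange_inv (p : Perm (Fin (n + 1))) :
    Injective fun j : Fin (n + 1) => p * (cycleRange j)⁻¹ := fun j j' h => by
  simpa only [cycleRange_inv_apply_zero] using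
    congrArg (fun q : Perm (Fin (n + 1)) => q 0) (mul_left_cancel h)

theorem sum_perm_eq_sum_mul_cycleRange_inv {M : Type*} [AddCommMonoid M]
    (p : Perm (Fin (n + 1))) (f : Perm (Fin (n + 1)) → M)
    (hf : ∀ q, (∀ j, q ≠ p * (cycleRange j)⁻¹) → f q = 0) :
    ∑ q, f q = ∑ j, f (p * (cycleRange j)⁻¹) :=
  (Fintype.sum_of_injective _ (injective_mul_cycleRange_inv p) _ f
    (fun q hq => hf q fun j hj => hq ⟨j, hj.symm⟩) fun _ => rfl).symm

end Fin

open Fin in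
theorem moveToFront_sum_col_eq_sum_mu {m : ℕ} (lam mu : Fin (m + 1) → ℝ)
    (T0 : Matrix (Perm (Fin (m + 1))) (Perm (Fin (m + 1))) ℝ) (p : Perm (Fin (m + 1)))
    (hdiag : T0 p p = (∑ i ∈ univ.filter (fun i : Fin (m + 1) => i ≠ 0), lam (p i))
        + ∑ i, mu (p i))
    (hoff : ∀ j : Fin (m + 1), j ≠ 0 →
      T0 (p * (cycleRange j)⁻¹) p = -lam ((p * (cycleRange j)⁻¹) 0))
    (hzero : ∀ q, q ≠ p → (∀ j : Fin (m + 1), j ≠ 0 → q ≠ p * (cycleRange j)⁻¹) → T0 q p = 0) :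
    ∑ q, T0 q p = ∑ i, mu i := by
  have hsupp : ∀ q, (∀ j, q ≠ p * (cycleRange j)⁻¹) → T0 q p = 0 := fun q hq =>
    hzero q (by simpa [cycleRange_zero] using hq 0) fun j _ => hq j
  have hoff_col : ∀ j ∈ univ.erase (0 : Fin (m + 1)), T0 (p * (cycleRange j)⁻¹) p = -lam (p j) :=
    fun j hj => by
      rw [hoff j (ne_of_mem_erase hj), Perm.mul_apply, cycleRange_inv_apply_zero]
  rw [sum_perm_eq_sum_mul_cycleRange_inv p _ hsupp, ← add_sum_erase _ _ (mem_univ 0),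
    sum_congr rfl hoff_col, cycleRange_zero, inv_one, mul_one, hdiag, filter_ne',
    sum_neg_distrib, Equiv.sum_comp p mu]
  ring

/-- Every column of the matrix `T₀` of the single-source heterogeneous SHS sums to
`∑ᵢ μᵢ`; consequently `T₀ v = c` implies `(∑ᵢ μᵢ) ∑ₚ vₚ = ∑_q c_q`.
Here `h_j(p)` (moving the j-th element of `p` to the front) is, in 0-based form,
`p * (Fin.cycleRange j)⁻¹` for `j ≠ 0`. -/
theorem stmt_10 (n : ℕ) (hn : 0 < n) (lam mu : Fin n → ℝ)
    (T0 : Matrix (Equiv.Perm (Fin n)) (Equiv.Perm (Fin n)) ℝ)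
    (hdiag : ∀ q : Equiv.Perm (Fin n),
      T0 q q = (∑ i ∈ Finset.univ.filter (fun i : Fin n => i ≠ ⟨0, hn⟩), lam (q i))
        + ∑ i : Fin n, mu (q i))
    (hoff : ∀ (p : Equiv.Perm (Fin n)) (j : Fin n), j ≠ ⟨0, hn⟩ →
      T0 (p * (Fin.cycleRange j)⁻¹) p = -lam ((p * (Fin.cycleRange j)⁻¹) ⟨0, hn⟩))
    (hzero : ∀ q p : Equiv.Perm (Fin n), q ≠ p →
      (∀ j : Fin n, j ≠ ⟨0, hn⟩ → q ≠ p * (Fin.cycleRange j)⁻¹) → T0 q p = 0) :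
    (∀ p : Equiv.Perm (Fin n), ∑ q : Equiv.Perm (Fin n), T0 q p = ∑ i : Fin n, mu i) ∧
    ∀ v c : Equiv.Perm (Fin n) → ℝ, T0.mulVec v = c →
      (∑ i : Fin n, mu i) * ∑ p : Equiv.Perm (Fin n), v p
        = ∑ q : Equiv.Perm (Fin n), c q := by
  obtain ⟨m, rfl⟩ : ∃ m, n = m + 1 := ⟨n - 1, (Nat.succ_pred_eq_of_pos hn).symm⟩
  have colSum : ∀ p, ∑ q, T0 q p = ∑ i, mu i := fun p =>
    moveToFront_sum_col_eq_sum_mu lam mu T0 p (hdiag p) (hoff p) (hzero · p)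
  refine ⟨colSum, fun v c hvc => ?_⟩
  rw [← hvc, Matrix.sum_mulVec_of_forall_sum_col_eq T0 _ colSum]
end

section
/- Fix n ≥ 1 and 1 ≤ j ≤ n−1. The set of all j-increasing permutations of {1,…,n} is the disjoint union, over all (j+1)-increasing permutations p, of the sets { g_{j,k}(p) : n−j ≤ k ≤ n }. In particular every permutation that is j-increasing but not (j+1)-increasing can be written uniquely as g_{j,k}(p) for some (j+1)-increasing p and some k with n−j+1 ≤ k ≤ n. -/
/-- A permutation `q` of `Fin n` is `j`-increasing if its last `j` entries are
increasing (0-based positions `a` with `n ≤ a + j`). -/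
def JIncr (n j : ℕ) (q : Equiv.Perm (Fin n)) : Prop :=
  ∀ a b : Fin n, n ≤ (a : ℕ) + j → a < b → q a < q b

/-- `IsG n j k p q` says `q = g_{j,k}(p)`: `q` is obtained from `p` by taking the
entry at (0-based) position `k` and placing it at position `n - j - 1`, shifting
the entries at positions `n - j - 1, …, k - 1` one step to the right. -/
def IsG (n j : ℕ) (k : Fin n) (p q : Equiv.Perm (Fin n)) : Prop :=
  (∀ i : Fin n, (i : ℕ) + j + 1 < n → q i = p i) ∧
  (∀ i : Fin n, (i : ℕ) + j + 1 = n → q i = p k) ∧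
  (∀ i i' : Fin n, (i : ℕ) = (i' : ℕ) + 1 → n ≤ (i : ℕ) + j → (i : ℕ) ≤ (k : ℕ) →
    q i = p i') ∧
  (∀ i : Fin n, (k : ℕ) < (i : ℕ) → q i = p i)

set_option linter.unreachableTactic false
set_option linter.unusedTactic false

/-- The cycle on positions `[m, k]` sending `k ↦ m` and `i ↦ i+1` for `m ≤ i < k`. -/
def cyc (n m k : ℕ) (hmk : m ≤ k) (hk : k < n) : Equiv.Perm (Fin n) where
  toFun i := if i.val = k then ⟨m, lt_of_le_of_lt hmk hk⟩
    else if h : m ≤ i.val ∧ i.val < k then ⟨i.val + 1, by omega⟩ else i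
  invFun i := if i.val = m then ⟨k, hk⟩
    else if h : m < i.val ∧ i.val ≤ k then ⟨i.val - 1, by omega⟩ else i
  left_inv i := by
    simp only []
    split_ifs <;> (apply Fin.ext; simp_all <;> omega) <;> omega
  right_inv i := by
    simp only []
    split_ifs <;> (apply Fin.ext; simp_all <;> omega) <;> omega

lemma cyc_self (n m k : ℕ) (hmk : m ≤ k) (hk : k < n) (i : Fin n)
    (h : i.val < m ∨ k < i.val) : cyc n m k hmk hk i = i := by
  show (if i.val = k then _ else _) = i
  split_ifs <;> first | rfl | (apply Fin.ext; omega) | omega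

lemma cyc_top (n m k : ℕ) (hmk : m ≤ k) (hk : k < n) :
    cyc n m k hmk hk ⟨k, hk⟩ = ⟨m, lt_of_le_of_lt hmk hk⟩ := by
  show (if _ then _ else _) = _
  split_ifs <;> simp_all

lemma cyc_mid (n m k : ℕ) (hmk : m ≤ k) (hk : k < n) (i : Fin n)
    (h1 : m ≤ i.val) (h2 : i.val < k) :
    cyc n m k hmk hk i = ⟨i.val + 1, by omega⟩ := by
  show (if _ then _ else _) = _
  split_ifs <;> first | rfl | omega

/-- The set of `j`-increasing permutations is the disjoint union over
`(j+1)`-increasing `p` of `{g_{j,k}(p) : n-j ≤ k ≤ n}`: every `j`-increasing `q`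
has a unique representation `q = g_{j,k}(p)`; if moreover `q` is not
`(j+1)`-increasing then the unique representation has `k ≥ n-j+1` (0-based
`k ≥ n-j`). -/

theorem stmt_13 (n j : ℕ) (hn : 1 ≤ n) (hj1 : 1 ≤ j) (hj2 : j + 1 ≤ n) :
    (∀ q : Equiv.Perm (Fin n), JIncr n j q →
      ∃! pk : Equiv.Perm (Fin n) × Fin n,
        JIncr n (j + 1) pk.1 ∧ n ≤ (pk.2 : ℕ) + j + 1 ∧ IsG n j pk.2 pk.1 q) ∧
    ∀ q : Equiv.Perm (Fin n), JIncr n j q → ¬ JIncr n (j + 1) q →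
      ∃! pk : Equiv.Perm (Fin n) × Fin n,
        JIncr n (j + 1) pk.1 ∧ n ≤ (pk.2 : ℕ) + j ∧ IsG n j pk.2 pk.1 q := by
  classical
  obtain ⟨m, hm⟩ : ∃ m : ℕ, m + j + 1 = n := ⟨n - j - 1, by omega⟩
  have main : ∀ q : Equiv.Perm (Fin n), JIncr n j q →
      ∃ pk : Equiv.Perm (Fin n) × Fin n,
        (JIncr n (j + 1) pk.1 ∧ n ≤ (pk.2 : ℕ) + j + 1 ∧ IsG n j pk.2 pk.1 q) ∧
        (∀ pk' : Equiv.Perm (Fin n) × Fin n,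
          (JIncr n (j + 1) pk'.1 ∧ n ≤ (pk'.2 : ℕ) + j + 1 ∧ IsG n j pk'.2 pk'.1 q) →
          pk' = pk) ∧
        (¬ JIncr n (j + 1) q → n ≤ (pk.2 : ℕ) + j) := by
    intro q hq
    have hmono : ∀ x y : Fin n, m + 1 ≤ x.val → x < y → q x < q y := by
      intro x y hx hxy
      exact hq x y (by omega) hxy
    obtain ⟨fm, hfm⟩ : ∃ fm : Fin n, fm.val = m := ⟨⟨m, by omega⟩, rfl⟩
    obtain ⟨v, hv⟩ : ∃ v : Fin n, v = q fm := ⟨_, rfl⟩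
    -- find the insertion position k
    obtain ⟨k, hmk, hkn, hB, hC⟩ : ∃ k : ℕ, m ≤ k ∧ k < n ∧
        (∀ l : Fin n, m < l.val → l.val ≤ k → q l < v) ∧
        (∀ l : Fin n, k < l.val → v < q l) := by
      set T := Finset.univ.filter (fun l : Fin n => m < l.val ∧ v < q l) with hT_def
      have hTmem : ∀ l : Fin n, l ∈ T ↔ (m < l.val ∧ v < q l) := by
        intro l; simp [hT_def]
      have hBgen : ∀ (k : ℕ), (∀ l : Fin n, l ∈ T → k < l.val) →
          ∀ l : Fin n, m < l.val → l.val ≤ k → q l < v := by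
        intro k hk l h1 h2
        have hlT : l ∉ T := fun hmem => by have := hk l hmem; omega
        rw [hTmem] at hlT
        push_neg at hlT
        have hne : q l ≠ v := by
          intro h
          rw [hv] at h
          have := q.injective h
          rw [this, hfm] at h1
          omega
        exact lt_of_le_of_ne (hlT h1) hne
      by_cases hT : T.Nonempty
      · obtain ⟨hm1, hm2⟩ := (hTmem (T.min' hT)).mp (T.min'_mem hT)
        have hminlt := (T.min' hT).isLt
        refine ⟨(T.min' hT : ℕ) - 1, by omega, by omega, ?_, ?_⟩
        · refine hBgen _ ?_
          intro l hl
          have := T.min'_le l hl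
          rw [Fin.le_def] at this
          omega
        · intro l hl
          rcases Nat.eq_or_lt_of_le (show ((T.min' hT) : ℕ) ≤ l.val by omega) with h | h
          · have hel : T.min' hT = l := Fin.ext h
            rw [← hel]; exact hm2
          · exact hm2.trans (hmono _ _ (by omega) (by rw [Fin.lt_def]; omega))
      · refine ⟨n - 1, by omega, by omega, ?_, ?_⟩
        · refine hBgen _ ?_
          intro l hl
          exact absurd ⟨l, hl⟩ hT
        · intro l hl
          have := l.isLt
          omega
    -- build p
    obtain ⟨p, hp1, hp2, hp3⟩ : ∃ p : Equiv.Perm (Fin n),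
        (∀ l : Fin n, m ≤ l.val → l.val < k → ∀ h : l.val + 1 < n, p l = q ⟨l.val + 1, h⟩) ∧
        (p ⟨k, hkn⟩ = v) ∧
        (∀ l : Fin n, l.val < m ∨ k < l.val → p l = q l) := by
      refine ⟨q * cyc n m k hmk hkn, ?_, ?_, ?_⟩
      · intro l h1 h2 h3
        show q (cyc n m k hmk hkn l) = _
        rw [cyc_mid n m k hmk hkn l h1 h2]
      · show q (cyc n m k hmk hkn ⟨k, hkn⟩) = v
        rw [cyc_top, hv]
        congr 1
        exact (Fin.ext hfm).symm
      · intro l h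
        show q (cyc n m k hmk hkn l) = q l
        rw [cyc_self n m k hmk hkn l h]
    -- p is (j+1)-increasing
    have hpinc : JIncr n (j + 1) p := by
      intro a b ha hab
      have ha' : m ≤ a.val := by omega
      have hab' : a.val < b.val := hab
      have hbn := b.isLt
      rcases lt_trichotomy a.val k with h | h | h
      · rw [hp1 a ha' h (by omega)]
        rcases lt_trichotomy b.val k with h2 | h2 | h2
        · rw [hp1 b (by omega) h2 (by omega)]
          exact hmono _ _ (by simp; omega) (by rw [Fin.lt_def]; simp; omega)
        · have hbk : b = ⟨k, hkn⟩ := Fin.ext h2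
          have hpb : p b = v := by rw [hbk]; exact hp2
          rw [hpb]
          exact hB _ (by simp; omega) (by simp; omega)
        · rw [hp3 b (Or.inr h2)]
          exact hmono _ _ (by simp; omega) (by rw [Fin.lt_def]; simp; omega)
      · have hak : a = ⟨k, hkn⟩ := Fin.ext h
        have hpa : p a = v := by rw [hak]; exact hp2
        rw [hpa, hp3 b (Or.inr (by omega))]
        exact hC b (by omega)
      · rw [hp3 a (Or.inr h), hp3 b (Or.inr (by omega))]
        exact hmono _ _ (by omega) hab
    have hfk : ((⟨k, hkn⟩ : Fin n) : ℕ) = k := rfl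
    -- IsG holds
    have hG : IsG n j ⟨k, hkn⟩ p q := by
      refine ⟨?_, ?_, ?_, ?_⟩
      · intro i hi
        exact (hp3 i (Or.inl (by omega))).symm
      · intro i hi
        have hi' : i = fm := Fin.ext (by omega)
        rw [hi', ← hv]
        exact hp2.symm
      · intro i i' hii' h2 h3
        rw [hfk] at h3
        have h4 : m ≤ i'.val := by omega
        have h5 : i'.val < k := by omega
        rw [hp1 i' h4 h5 (by omega)]
        congr 1
        exact Fin.ext (by simp; omega)
      · intro i hi
        rw [hfk] at hi
        exact (hp3 i (Or.inr hi)).symm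
    refine ⟨(p, ⟨k, hkn⟩), ⟨hpinc, by simp only [hfk]; omega, hG⟩, ?_, ?_⟩
    · -- uniqueness
      rintro ⟨p', k'⟩ ⟨h1', h2', E1, E2, E3, E4⟩
      simp only at h1' h2' E1 E2 E3 E4 ⊢
      have hk'm : m ≤ k'.val := by omega
      have hvk' : p' k' = v := by
        rw [hv]
        exact (E2 fm (by omega)).symm
      have hkk' : k'.val = k := by
        by_contra hne
        rcases lt_or_gt_of_ne hne with h | h
        · -- k' < k
          have hln : k'.val + 1 < n := by omega
          have h5 : q ⟨k'.val + 1, hln⟩ = p' ⟨k'.val + 1, hln⟩ := E4 _ (by simp)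
          have h6 : q ⟨k'.val + 1, hln⟩ < v := hB _ (by simp; omega) (by simp; omega)
          have h7 : p' k' < p' ⟨k'.val + 1, hln⟩ :=
            h1' k' _ (by omega) (by rw [Fin.lt_def]; simp)
          rw [hvk', ← h5] at h7
          exact absurd h7 (not_lt.mpr h6.le)
        · -- k < k'
          have hl0 : k'.val - 1 < n := by omega
          have h5 : q k' = p' ⟨k'.val - 1, hl0⟩ := E3 k' _ (by simp; omega) (by omega) le_rfl
          have h6 : p' ⟨k'.val - 1, hl0⟩ < p' k' :=
            h1' _ k' (by simp; omega) (by rw [Fin.lt_def]; simp; omega)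
          rw [hvk', ← h5] at h6
          have h7 : v < q k' := hC k' (by omega)
          exact absurd h6 (not_lt.mpr h7.le)
      have hk'eq : k' = ⟨k, hkn⟩ := Fin.ext hkk'
      subst hk'eq
      have hpeq : p' = p := by
        apply Equiv.ext
        intro l
        rcases lt_trichotomy l.val k with h | h | h
        · rcases lt_or_ge l.val m with h2 | h2
          · rw [← E1 l (by omega), hp3 l (Or.inl h2)]
          · have hln : l.val + 1 < n := by omega
            rw [← E3 ⟨l.val + 1, hln⟩ l (by simp) (by simp; omega) (by rw [hfk]; simp; omega),
              hp1 l h2 h hln]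
        · have hlk : l = ⟨k, hkn⟩ := Fin.ext h
          rw [hlk, hp2, hvk']
        · rw [← E4 l (by rw [hfk]; exact h), hp3 l (Or.inr h)]
      rw [hpeq]
    · -- not (j+1)-increasing implies k ≥ m+1
      intro hnot
      rw [JIncr] at hnot
      push_neg at hnot
      obtain ⟨a, b, ha, hab, hab2⟩ := hnot
      have ham : a.val = m := by
        by_contra h
        have h' : m + 1 ≤ a.val := by omega
        exact absurd (hmono a b h' hab) (not_lt.mpr hab2)
      have haeq : a = fm := Fin.ext (by omega)
      rw [haeq] at hab hab2
      rw [← hv] at hab2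
      have hqb : q b < v := by
        rcases lt_or_eq_of_le hab2 with h | h
        · exact h
        · rw [hv] at h
          have hbfm := q.injective h
          rw [hbfm] at hab
          exact absurd hab (lt_irrefl _)
      rw [hfk]
      by_contra hcon
      have hkm : k = m := by omega
      have hvb : v < q b := by
        refine hC b ?_
        rw [Fin.lt_def, hfm] at hab
        omega
      exact absurd hvb (not_lt.mpr hqb.le)
  constructor
  · intro q hq
    obtain ⟨pk, h1, h2, _⟩ := main q hq
    exact ⟨pk, h1, h2⟩
  · intro q hq hq2
    obtain ⟨pk, h1, h2, h3⟩ := main q hq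
    exact ⟨pk, ⟨h1.1, h3 hq2, h1.2.2⟩,
      fun y hy => h2 y ⟨hy.1, le_trans hy.2.1 (Nat.le_succ _), hy.2.2⟩⟩
end

section
/- Let λ, μ_1, μ_2 > 0 with μ_1 ≠ μ_2, and set c = μ_1(λ+μ_2)/(μ_2(λ+μ_1)). For λ_1 ∈ (0, λ) and λ_2 = λ − λ_1, the stationarity condition of the heterogeneous two-server AoI Δ(λ_1) = 1/(μ_1+μ_2) + 1/λ + (1/((μ_1+μ_2)λ)) (μ_1λ_2/(λ_1+μ_2) + μ_2λ_1/(λ_2+μ_1)), i.e. Δ'(λ_1) = 0, is equivalent to the quadratic equation (1−c)λ_1² + 2λ_1(μ_2 + c(λ+μ_1)) + μ_2² − c(λ+μ_1)² = 0. -/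
/-
The two fractions in `Δ` are Möbius functions of `λ₁`, so `Δ'(λ₁)` is a nonzero constant times
`μ₂(λ+μ₁)/(λ₂+μ₁)² − μ₁(λ+μ₂)/(λ₁+μ₂)²`. Clearing denominators, this vanishes iff
`(λ₁+μ₂)² = c (λ₂+μ₁)²`, and expanding `λ₂ = λ − λ₁` gives the quadratic.
-/

theorem hasDerivAt_linear_div_linear {p q r s x : ℝ} (hx : r * x + s ≠ 0) :
    HasDerivAt (fun y => (p * y + q) / (r * y + s)) ((p * s - q * r) / (r * x + s) ^ 2) x := by
  have hnum : HasDerivAt (fun y => p * y + q) p x := by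
    simpa using ((hasDerivAt_id x).const_mul p).add_const q
  have hden : HasDerivAt (fun y => r * y + s) r x := by
    simpa using ((hasDerivAt_id x).const_mul r).add_const s
  exact (hnum.div hden hx).congr_deriv (by ring)

theorem div_sq_sub_div_sq_eq_zero_iff {p q A B : ℝ} (hp : p ≠ 0) (hA : A ≠ 0) (hB : B ≠ 0) :
    p / B ^ 2 - q / A ^ 2 = 0 ↔ A ^ 2 - q / p * B ^ 2 = 0 := by
  rw [div_sub_div _ _ (pow_ne_zero 2 hB) (pow_ne_zero 2 hA), div_eq_zero_iff,
    or_iff_left (by positivity), ← mul_right_inj' hp]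
  field_simp
  constructor <;> intro h <;> linarith

theorem hasDerivAt_twoServerAoI {lam m1 m2 x : ℝ} (hA : x + m2 ≠ 0) (hB : lam - x + m1 ≠ 0) :
    HasDerivAt
      (fun y => 1 / (m1 + m2) + 1 / lam
        + (1 / ((m1 + m2) * lam)) * (m1 * (lam - y) / (y + m2) + m2 * y / (lam - y + m1)))
      ((1 / ((m1 + m2) * lam)) *
        (m2 * (lam + m1) / (lam - x + m1) ^ 2 - m1 * (lam + m2) / (x + m2) ^ 2)) x := by
  have h1 : HasDerivAt (fun y => m1 * (lam - y) / (y + m2))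
      (-(m1 * (lam + m2)) / (x + m2) ^ 2) x := by
    convert hasDerivAt_linear_div_linear (p := -m1) (q := m1 * lam) (r := 1) (s := m2)
      (x := x) (by simpa using hA) using 1
    · funext y; ring
    · ring
  have h2 : HasDerivAt (fun y => m2 * y / (lam - y + m1))
      (m2 * (lam + m1) / (lam - x + m1) ^ 2) x := by
    convert hasDerivAt_linear_div_linear (p := m2) (q := 0) (r := -1) (s := lam + m1)
      (x := x) (by convert hB using 1; ring) using 1
    · funext y; ring
    · ring
  exact (((h1.add h2).const_mul _).const_add _).congr_deriv (by ring)

theorem stmt_15_general (lam m1 m2 : ℝ) (hl : 0 < lam) (hm1 : 0 < m1) (hm2 : 0 < m2)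
    (c : ℝ) (hc : c = m1 * (lam + m2) / (m2 * (lam + m1)))
    (Delta : ℝ → ℝ)
    (hDelta : ∀ x, Delta x = 1 / (m1 + m2) + 1 / lam
        + (1 / ((m1 + m2) * lam)) * (m1 * (lam - x) / (x + m2) + m2 * x / (lam - x + m1)))
    (l1 : ℝ) (hl1 : 0 < l1) (hl1' : l1 < lam) :
    deriv Delta l1 = 0 ↔
      (1 - c) * l1 ^ 2 + 2 * l1 * (m2 + c * (lam + m1)) + m2 ^ 2 - c * (lam + m1) ^ 2
        = 0 := by
  have hA : l1 + m2 ≠ 0 := by positivity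
  have hB : lam - l1 + m1 ≠ 0 := by linarith
  rw [funext hDelta, (hasDerivAt_twoServerAoI hA hB).deriv,
    mul_eq_zero, or_iff_right (by positivity),
    div_sq_sub_div_sq_eq_zero_iff (by positivity) hA hB, ← hc]
  constructor <;> intro h <;> linear_combination h

/-- The stationarity condition `Δ'(λ₁) = 0` for the heterogeneous two-server AoI is
equivalent to the quadratic equation
`(1−c)λ₁² + 2λ₁(μ₂ + c(λ+μ₁)) + μ₂² − c(λ+μ₁)² = 0`. -/
theorem stmt_15 (lam m1 m2 : ℝ) (hl : 0 < lam) (hm1 : 0 < m1) (hm2 : 0 < m2)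
    (hne : m1 ≠ m2) (c : ℝ) (hc : c = m1 * (lam + m2) / (m2 * (lam + m1)))
    (Delta : ℝ → ℝ)
    (hDelta : ∀ x, Delta x = 1 / (m1 + m2) + 1 / lam
        + (1 / ((m1 + m2) * lam)) * (m1 * (lam - x) / (x + m2) + m2 * x / (lam - x + m1)))
    (l1 : ℝ) (hl1 : 0 < l1) (hl1' : l1 < lam) :
    deriv Delta l1 = 0 ↔
      (1 - c) * l1 ^ 2 + 2 * l1 * (m2 + c * (lam + m1)) + m2 ^ 2 - c * (lam + m1) ^ 2
        = 0 :=
  stmt_15_general lam m1 m2 hl hm1 hm2 c hc Delta hDelta l1 hl1 hl1'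
end

section
/- Let n ≥ 2 and λ, μ > 0. Suppose v_0, …, v_n satisfy equations (ii) and (iii) of the single-source homogeneous SHS system: for 2 ≤ i ≤ n, ((n-i+1)λ + (i-1)μ) v_i = 1 + μ ∑_{j=1}^{i-1} v_j + λ(n-i+1) v_{i-1}, and v_0 = 1/(nμ) + (1/n)∑_{j=1}^n v_j. Then, writing w_n = v_n − v_{n-1}, one has v_0 = v_n + (λ/(nμ)) w_n. -/
/-- Key algebraic step in the homogeneous single-source derivation:
`v₀ = vₙ + (λ/(nμ))(vₙ − v_{n−1})`. -/
theorem stmt_17 (n : ℕ) (hn : 2 ≤ n) (lam mu : ℝ) (hl : 0 < lam) (hm : 0 < mu)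
    (v : ℕ → ℝ)
    (h2 : ∀ i : ℕ, 2 ≤ i → i ≤ n →
      (((n : ℝ) - (i : ℝ) + 1) * lam + ((i : ℝ) - 1) * mu) * v i
        = 1 + mu * ∑ j ∈ Finset.Icc 1 (i - 1), v j
          + lam * ((n : ℝ) - (i : ℝ) + 1) * v (i - 1))
    (h0 : v 0 = 1 / ((n : ℝ) * mu) + (1 / (n : ℝ)) * ∑ j ∈ Finset.Icc 1 n, v j) :
    v 0 = v n + (lam / ((n : ℝ) * mu)) * (v n - v (n - 1)) := by
  have hA := h2 n hn le_rfl
  have hn1 : n = (n - 1) + 1 := (Nat.succ_pred_eq_of_pos (by omega)).symm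
  have hsum : ∑ j ∈ Finset.Icc 1 n, v j
      = (∑ j ∈ Finset.Icc 1 (n - 1), v j) + v n := by
    rw [hn1, Finset.sum_Icc_succ_top (by omega), ← hn1]
  rw [hsum] at h0
  have hnR : (1:ℝ) ≤ (n:ℝ) := by exact_mod_cast Nat.one_le_of_lt hn
  have hnne : (n:ℝ) ≠ 0 := by linarith
  have hmne : mu ≠ 0 := ne_of_gt hm
  field_simp at h0 ⊢
  nlinarith [hA, h0, mul_pos hm (by linarith : (0:ℝ) < (n:ℝ))]
end

section
/- Let n ≥ 2, λ^{(1)} > 0, λ̄ > 0, μ > 0, and λ = λ^{(1)} + λ̄. Suppose v_1,…,v_{n+1} satisfy, for 2 ≤ i ≤ n: ((n-i+1)λ^{(1)} + i λ̄ + (i-1)μ) v_i = 1 + λ^{(1)}(n-i+1) v_{i-1} + i λ̄ v_{i+1} + μ ∑_{j=1}^{i-1} v_j. Then the differences w_i = v_i − v_{i-1} satisfy, for 2 ≤ i ≤ n−1: ((n-i)λ^{(1)} + i λ̄ + iμ) w_{i+1} = λ^{(1)}(n-i+1) w_i + (i+1) λ̄ w_{i+2}. -/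
/-- Three-term recurrence for the differences `wᵢ = vᵢ − v_{i−1}` in the
multi-source homogeneous network, obtained by subtracting consecutive SHS
equations. -/
theorem stmt_18 (n : ℕ) (hn : 2 ≤ n) (l1 lbar mu : ℝ) (hl1 : 0 < l1) (hlb : 0 < lbar)
    (hm : 0 < mu) (lam : ℝ) (hlam : lam = l1 + lbar) (v : ℕ → ℝ)
    (hsys : ∀ i : ℕ, 2 ≤ i → i ≤ n →
      (((n : ℝ) - (i : ℝ) + 1) * l1 + (i : ℝ) * lbar + ((i : ℝ) - 1) * mu) * v i
        = 1 + l1 * ((n : ℝ) - (i : ℝ) + 1) * v (i - 1) + (i : ℝ) * lbar * v (i + 1)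
          + mu * ∑ j ∈ Finset.Icc 1 (i - 1), v j) :
    ∀ i : ℕ, 2 ≤ i → i ≤ n - 1 →
      (((n : ℝ) - (i : ℝ)) * l1 + (i : ℝ) * lbar + (i : ℝ) * mu) * (v (i + 1) - v i)
        = l1 * ((n : ℝ) - (i : ℝ) + 1) * (v i - v (i - 1))
          + ((i : ℝ) + 1) * lbar * (v (i + 2) - v (i + 1)) := by
  intro i h2 hin
  have hA := hsys i h2 (by omega)
  have hB := hsys (i + 1) (by omega) (by omega)
  have hs : ∑ j ∈ Finset.Icc 1 ((i + 1) - 1), v j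
      = (∑ j ∈ Finset.Icc 1 (i - 1), v j) + v i := by
    have h1 : (i + 1) - 1 = (i - 1) + 1 := by omega
    rw [h1, Finset.sum_Icc_succ_top (by omega)]
    congr 2
    omega
  rw [hs] at hB
  have hI : ((i + 1 : ℕ) : ℝ) = (i : ℝ) + 1 := by push_cast; ring
  have hJ : (i + 1) - 1 = i := by omega
  rw [hI, hJ] at hB
  have hK : i + 1 + 1 = i + 2 := by omega
  rw [hK] at hB
  linear_combination hB - hA
end
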